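/- arXiv:2307.01321 — 2 statements merged into one kernel-verified Lean document; each statement's English description precedes it below -/
import Mathlib

section
/- If N is a complete metric space, then the space of bounded Lipschitz jets J^b(M,p,N,q), i.e., jets at finite distance from the jet of the constant function x ↦ q, equipped with the jet distance, is a complete metric space. -/
open Filter Topology ENNReal

/-- Jet pseudo-distance: `limsup_{x → p, x ≠ p} d(f x, g x)/d(x,p)` in `[0,∞]`. -/
noncomputable def jetDist {M N : Type*} [MetricSpace M] [MetricSpace N]
    (p : M) (f g : M → N) : ℝ≥0∞ :=
  Filter.limsup (fun x => edist (f x) (g x) / edist x p) (𝓝[≠] p)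

/-!
The limit jet is obtained by gluing. Pass to a subsequence `h k = f (φ k)` whose consecutive
jet distances are below `2⁻¹ ^ k`; then `h k` and `h (k + 1)` satisfy
`d(h k x, h (k + 1) x) ≤ 2⁻¹ ^ k d(x, p)` on some ball `B(p, s k)`, where the radii `s k`
may be taken decreasing to `0`. On the shell `s (k + 1) ≤ d(x, p) < s k` set `g x = h k x`.
For `x` in `B(p, s j)` the values `h j x, h (j + 1) x, …, g x` form a chain whose steps sum to
at most `2 · 2⁻¹ ^ j · d(x, p)`, so `h j → g` in jet distance; a Cauchy sequence with a
convergent subsequence converges.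
-/

/-- Unlike `ENNReal.limsup_add_le`, no `CountableInterFilter` is needed (think of `𝓝[≠] p`). -/
lemma ENNReal.limsup_add_le' {ι : Type*} {l : Filter ι} (u v : ι → ℝ≥0∞) :
    limsup (u + v) l ≤ limsup u l + limsup v l := by
  refine ENNReal.le_of_forall_pos_le_add fun ε hε hfin => ?_
  have hε2 : (ε : ℝ≥0∞) / 2 ≠ 0 := by simpa using hε.ne'
  obtain ⟨hu_fin, hv_fin⟩ := ENNReal.add_lt_top.1 hfin
  have hu := eventually_lt_of_limsup_lt (ENNReal.lt_add_right hu_fin.ne hε2)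
  have hv := eventually_lt_of_limsup_lt (ENNReal.lt_add_right hv_fin.ne hε2)
  calc limsup (u + v) l ≤ limsup u l + ε / 2 + (limsup v l + ε / 2) := by
        refine limsup_le_of_le (by isBoundedDefault) ?_
        filter_upwards [hu, hv] with x hux hvx using (ENNReal.add_lt_add hux hvx).le
    _ = limsup u l + limsup v l + ε := by rw [add_add_add_comm, ENNReal.add_halves]

lemma ENNReal.exists_antitone_tendsto_zero_le {r : ℕ → ℝ≥0∞} (hr : ∀ k, 0 < r k) :
    ∃ s : ℕ → ℝ≥0∞, Antitone s ∧ Tendsto s atTop (𝓝 0) ∧ ∀ k, 0 < s k ∧ s k ≤ r k := by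
  refine ⟨fun k => (Finset.range (k + 1)).inf r ⊓ (k : ℝ≥0∞)⁻¹, ?_, ?_, fun k => ⟨?_, ?_⟩⟩
  · intro m n hmn
    exact inf_le_inf (Finset.inf_mono (Finset.range_subset_range.2 (by omega)))
      (ENNReal.inv_le_inv.2 (Nat.cast_le.2 hmn))
  · exact tendsto_of_tendsto_of_tendsto_of_le_of_le tendsto_const_nhds
      ENNReal.tendsto_inv_nat_nhds_zero (fun _ => zero_le) fun _ => inf_le_right
  · exact lt_inf_iff.2 ⟨(Finset.lt_inf_iff ENNReal.zero_lt_top).2 fun i _ => hr i,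
      ENNReal.inv_pos.2 (ENNReal.natCast_ne_top k)⟩
  · exact inf_le_left.trans (Finset.inf_le (Finset.self_mem_range_succ k))

lemma ENNReal.tsum_inv_two_pow_add (j : ℕ) : ∑' i, (2⁻¹ : ℝ≥0∞) ^ (j + i) = 2⁻¹ ^ j * 2 := by
  simp only [pow_add, ENNReal.tsum_mul_left, ENNReal.tsum_geometric, ENNReal.one_sub_inv_two,
    inv_inv]

section JetDist

variable {M N : Type*} [MetricSpace M] [MetricSpace N]

lemma jetDist_comm (p : M) (f g : M → N) : jetDist p f g = jetDist p g f := by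
  simp only [jetDist, edist_comm]

lemma jetDist_triangle (p : M) (f g h : M → N) :
    jetDist p f h ≤ jetDist p f g + jetDist p g h := by
  refine (limsup_le_limsup (Eventually.of_forall fun x => ?_)).trans
    (ENNReal.limsup_add_le' _ _)
  simp only [Pi.add_apply, ← ENNReal.add_div]
  gcongr
  exact edist_triangle _ _ _

lemma jetDist_le_of_edist_le {p : M} {f g : M → N} {r C : ℝ≥0∞} (hr : 0 < r)
    (h : ∀ x ≠ p, edist x p < r → edist (f x) (g x) ≤ C * edist x p) :
    jetDist p f g ≤ C := by
  refine limsup_le_of_le (by isBoundedDefault) ?_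
  filter_upwards [nhdsWithin_le_nhds (Metric.eball_mem_nhds p hr), self_mem_nhdsWithin]
    with x hxr hxp
  exact ENNReal.div_le_of_le_mul (h x hxp hxr)

lemma exists_edist_le_of_jetDist_lt {p : M} {f g : M → N} {C : ℝ≥0∞} (h : jetDist p f g < C) :
    ∃ r > 0, ∀ x ≠ p, edist x p < r → edist (f x) (g x) ≤ C * edist x p := by
  obtain ⟨r, hr, hball⟩ := EMetric.mem_nhdsWithin_iff.1 (eventually_lt_of_limsup_lt h)
  refine ⟨r, hr, fun x hxp hxr => ?_⟩
  have hx : edist (f x) (g x) / edist x p < C := hball ⟨hxr, hxp⟩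
  exact ((ENNReal.div_lt_iff (Or.inl (edist_pos.2 hxp).ne') (Or.inl (edist_ne_top _ _))).1 hx).le

end JetDist

section Shells

variable {M : Type*} [EMetricSpace M] (p : M) (s : ℕ → ℝ≥0∞)

/-- The `k` with `s (k + 1) ≤ edist x p < s k`, when `s` is antitone and tends to `0`. -/
noncomputable def shellIndex (x : M) : ℕ :=
  sInf {k | s (k + 1) ≤ edist x p}

lemma shellIndex_self (hs : ∀ k, 0 < s k) : shellIndex p s p = 0 := by
  simp [shellIndex, (hs _).ne']

variable {p s}

lemma edist_lt_of_lt_shellIndex {x : M} {k : ℕ} (hk : k < shellIndex p s x) :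
    edist x p < s (k + 1) :=
  not_le.1 (Nat.notMem_of_lt_sInf hk)

lemma le_shellIndex (hanti : Antitone s) (hs : Tendsto s atTop (𝓝 0)) {x : M} (hx : x ≠ p)
    {j : ℕ} (hj : edist x p < s j) : j ≤ shellIndex p s x := by
  obtain ⟨k, hk⟩ := (eventually_atTop.1 (hs.eventually (gt_mem_nhds (edist_pos.2 hx))))
  have hmem : shellIndex p s x ∈ {k | s (k + 1) ≤ edist x p} :=
    Nat.sInf_mem ⟨k, (hk (k + 1) k.le_succ).le⟩
  by_contra! hlt
  exact (hj.trans_le ((hanti hlt).trans hmem)).false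

lemma edist_le_tsum_mul_of_shellIndex {N : Type*} [PseudoEMetricSpace N] {h : ℕ → M → N}
    {c : ℕ → ℝ≥0∞} (hanti : Antitone s) (hs : Tendsto s atTop (𝓝 0))
    (hstep : ∀ k, ∀ x ≠ p, edist x p < s k → edist (h k x) (h (k + 1) x) ≤ c k * edist x p)
    {x : M} (hx : x ≠ p) {j : ℕ} (hj : edist x p < s j) :
    edist (h j x) (h (shellIndex p s x) x) ≤ (∑' i, c (j + i)) * edist x p :=
  calc edist (h j x) (h (shellIndex p s x) x)
      ≤ ∑ i ∈ Finset.Ico j (shellIndex p s x), c i * edist x p :=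
        edist_le_Ico_sum_of_edist_le (f := fun k => h k x) (le_shellIndex hanti hs hx hj)
          fun _ hi => hstep _ x hx
            ((edist_lt_of_lt_shellIndex hi).trans_le (hanti (Nat.le_succ _)))
    _ = (∑ i ∈ Finset.range (shellIndex p s x - j), c (j + i)) * edist x p := by
        rw [Finset.sum_Ico_eq_sum_range, Finset.sum_mul]
    _ ≤ (∑' i, c (j + i)) * edist x p := by gcongr; exact ENNReal.sum_le_tsum _

end Shells

theorem exists_jetDist_le_tsum_of_jetDist_succ_lt {M N : Type*} [MetricSpace M]
    [MetricSpace N] {p : M} {h : ℕ → M → N} {c : ℕ → ℝ≥0∞}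
    (hc : ∀ k, jetDist p (h k) (h (k + 1)) < c k) :
    ∃ g : M → N, g p = h 0 p ∧ ∀ j, jetDist p (h j) g ≤ ∑' i, c (j + i) := by
  choose r hr_pos hr using fun k => exists_edist_le_of_jetDist_lt (hc k)
  obtain ⟨s, hanti, hs, hs_pos_le⟩ := ENNReal.exists_antitone_tendsto_zero_le hr_pos
  refine ⟨fun x => h (shellIndex p s x) x,
    congrArg (h · p) (shellIndex_self p s fun k => (hs_pos_le k).1),
    fun j => jetDist_le_of_edist_le (hs_pos_le j).1 fun x hx hxj => ?_⟩
  exact edist_le_tsum_mul_of_shellIndex hanti hs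
    (fun k x hx hxs => hr k x hx (hxs.trans_le (hs_pos_le k).2)) hx hxj

theorem bounded_jets_complete_general {M N : Type*} [MetricSpace M] [MetricSpace N]
    (p : M) (q : N)
    (f : ℕ → M → N) (hfq : ∀ n, f n p = q)
    (hbdd : ∀ n, jetDist p (f n) (fun _ => q) < ⊤)
    (hcauchy : ∀ ε : ℝ≥0∞, 0 < ε → ∃ K : ℕ, ∀ m ≥ K, ∀ n ≥ K,
      jetDist p (f m) (f n) < ε) :
    ∃ g : M → N, g p = q ∧ jetDist p g (fun _ => q) < ⊤ ∧
      Tendsto (fun n => jetDist p (f n) g) atTop (𝓝 0) := by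
  obtain ⟨φ, hφ, hφK⟩ : ∃ φ : ℕ → ℕ, StrictMono φ ∧
      ∀ k, ∀ m ≥ φ k, ∀ n ≥ φ k, jetDist p (f m) (f n) < 2⁻¹ ^ k :=
    extraction_forall_of_eventually' fun k => by
      obtain ⟨K, hK⟩ := hcauchy (2⁻¹ ^ k) (ENNReal.pow_pos (by simp) k)
      exact ⟨K, fun K' hK' m hm n hn => hK m (hK'.trans hm) n (hK'.trans hn)⟩
  obtain ⟨g, hgp, hg⟩ := exists_jetDist_le_tsum_of_jetDist_succ_lt (p := p) (h := f ∘ φ)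
    fun k => hφK k _ le_rfl _ (hφ.monotone k.le_succ)
  simp only [Function.comp_apply, ENNReal.tsum_inv_two_pow_add] at hg hgp
  refine ⟨g, hgp.trans (hfq _), ?_, ?_⟩
  · have hg0 : jetDist p g (f (φ 0)) < ⊤ :=
      ((jetDist_comm p g _).trans_le (hg 0)).trans_lt (by simp)
    exact (jetDist_triangle p g (f (φ 0)) _).trans_lt (ENNReal.add_lt_top.2 ⟨hg0, hbdd _⟩)
  · have hbound : Tendsto (fun j => (2⁻¹ : ℝ≥0∞) ^ j + 2⁻¹ ^ j * 2) atTop (𝓝 0) := by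
      simpa using (ENNReal.tendsto_pow_atTop_nhds_zero_of_lt_one (r := 2⁻¹) (by simp)).add
        (ENNReal.Tendsto.mul_const (ENNReal.tendsto_pow_atTop_nhds_zero_of_lt_one (by simp))
          (Or.inr ENNReal.ofNat_ne_top))
    refine ENNReal.tendsto_atTop_zero.2 fun ε hε => ?_
    obtain ⟨j, hj⟩ := (hbound.eventually (gt_mem_nhds hε)).exists
    exact ⟨φ j, fun m hm => (jetDist_triangle p _ (f (φ j)) _).trans
      ((add_le_add (hφK j m hm _ le_rfl).le (hg j)).trans hj.le)⟩

/-- Completeness of the space of bounded Lipschitz jets `J^b(M,p,N,q)`: if `N` is a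
complete metric space, then any sequence of bounded jets which is Cauchy for the jet
distance converges (in jet distance) to a bounded jet. -/
theorem bounded_jets_complete {M N : Type*} [MetricSpace M] [MetricSpace N]
    [CompleteSpace N] (p : M) (q : N)
    (f : ℕ → M → N) (hfq : ∀ n, f n p = q)
    (hbdd : ∀ n, jetDist p (f n) (fun _ => q) < ⊤)
    (hcauchy : ∀ ε : ℝ≥0∞, 0 < ε → ∃ K : ℕ, ∀ m ≥ K, ∀ n ≥ K,
      jetDist p (f m) (f n) < ε) :
    ∃ g : M → N, g p = q ∧ jetDist p g (fun _ => q) < ⊤ ∧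
      Tendsto (fun n => jetDist p (f n) g) atTop (𝓝 0) :=
  bounded_jets_complete_general p q f hfq hbdd hcauchy
end

section
/- The norm of an oblique projection is bounded by the reciprocal of the sine of the angle between its range's complement and kernel: if V is a finite-dimensional inner product space, E and D are complementary subspaces, then the projection p^E_D onto D along E satisfies ‖p^E_D‖ ≤ 1/sin(θ), where θ is the minimal angle between E and D, i.e., sin(θ) = min over unit vectors e ∈ E, of the distance from e to D (equivalently the minimal principal angle). -/
open Metric Submodule RealInnerProductSpace

/-!
Write `v = d + c • u` with `d = p^E_D v ∈ D` and `u` a unit vector of `E`. The squared distance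
`‖d‖ ^ 2 - ⟪u, d⟫ ^ 2` from `d` to the line `ℝ u` is at most `‖v‖ ^ 2`, and it is also `‖d‖ ^ 2`
times the squared distance from `u` to the line `ℝ d ⊆ D`. Hence `‖d‖ sin θ ≤ ‖d‖ dist(u, D) ≤ ‖v‖`,
and `sin θ > 0` because it is attained on the compact unit sphere of `E`, which misses `D`.
-/

theorem IsCompact.sInf_image_infDist_pos {X : Type*} [PseudoMetricSpace X] {S T : Set X}
    (hS : IsCompact S) (hS₀ : S.Nonempty) (hT : IsClosed T) (hT₀ : T.Nonempty)
    (hST : Disjoint S T) : 0 < sInf ((infDist · T) '' S) := by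
  obtain ⟨x, hxS, hx⟩ := hS.exists_sInf_image_eq hS₀ (continuous_infDist_pt T).continuousOn
  rw [hx]
  exact (hT.notMem_iff_infDist_pos hT₀).1 (hST.notMem_of_mem_left hxS)

section Normed

variable {V : Type*} [NormedAddCommGroup V] [NormedSpace ℝ V]

theorem Submodule.isCompact_setOf_mem_and_norm_eq_one [FiniteDimensional ℝ V]
    (E : Submodule ℝ V) : IsCompact {e : V | e ∈ E ∧ ‖e‖ = 1} := by
  have hS : {e : V | e ∈ E ∧ ‖e‖ = 1} = (E : Set V) ∩ sphere 0 1 := by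
    ext; simp
  rw [hS]
  exact (isCompact_sphere 0 1).inter_left E.closed_of_finiteDimensional

theorem Submodule.exists_norm_eq_one_smul_eq {E : Submodule ℝ V} (hE : E ≠ ⊥) {e : V}
    (he : e ∈ E) : ∃ u ∈ E, ‖u‖ = 1 ∧ ∃ c : ℝ, c • u = e := by
  by_cases he₀ : e = 0
  · obtain ⟨x, hxE, hx₀⟩ := exists_mem_ne_zero_of_ne_bot hE
    exact ⟨‖x‖⁻¹ • x, E.smul_mem _ hxE, norm_smul_inv_norm hx₀, 0, by rw [zero_smul, he₀]⟩
  · refine ⟨‖e‖⁻¹ • e, E.smul_mem _ he, norm_smul_inv_norm he₀, ‖e‖, ?_⟩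
    rw [smul_smul, mul_inv_cancel₀ (norm_ne_zero_iff.2 he₀), one_smul]

end Normed

section InnerProduct

variable {V : Type*} [NormedAddCommGroup V] [InnerProductSpace ℝ V]

theorem norm_sq_sub_inner_sq_le_norm_add_smul_sq {u : V} (hu : ‖u‖ = 1) (d : V) (c : ℝ) :
    ‖d‖ ^ 2 - ⟪u, d⟫ ^ 2 ≤ ‖d + c • u‖ ^ 2 := by
  have hexpand : ‖d + c • u‖ ^ 2 = ‖d‖ ^ 2 - ⟪u, d⟫ ^ 2 + (c + ⟪u, d⟫) ^ 2 := by
    rw [norm_add_sq_real, inner_smul_right, norm_smul, hu, real_inner_comm, Real.norm_eq_abs,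
      mul_one, sq_abs]
    ring
  rw [hexpand]
  exact le_add_of_nonneg_right (sq_nonneg _)

theorem norm_sq_mul_norm_sub_smul_sq {u : V} (hu : ‖u‖ = 1) (d : V) :
    ‖d‖ ^ 2 * ‖u - (⟪u, d⟫ / ‖d‖ ^ 2) • d‖ ^ 2 = ‖d‖ ^ 2 - ⟪u, d⟫ ^ 2 := by
  rcases eq_or_ne d 0 with rfl | hd
  · simp
  have hd' : ‖d‖ ≠ 0 := norm_ne_zero_iff.2 hd
  rw [norm_sub_sq_real, inner_smul_right, norm_smul, hu, Real.norm_eq_abs, mul_pow, sq_abs]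
  field_simp
  ring

theorem norm_mul_infDist_le_norm_add_smul (D : Submodule ℝ V) {u d : V} (hu : ‖u‖ = 1)
    (hd : d ∈ D) (c : ℝ) : ‖d‖ * infDist u D ≤ ‖d + c • u‖ := by
  have hdist : infDist u D ≤ ‖u - (⟪u, d⟫ / ‖d‖ ^ 2) • d‖ := by
    rw [← dist_eq_norm]
    exact infDist_le_dist_of_mem (D.smul_mem _ hd)
  refine (pow_le_pow_iff_left₀ (mul_nonneg (norm_nonneg _) infDist_nonneg) (norm_nonneg _)
    two_ne_zero).1 ?_
  calc (‖d‖ * infDist u D) ^ 2 ≤ ‖d‖ ^ 2 * ‖u - (⟪u, d⟫ / ‖d‖ ^ 2) • d‖ ^ 2 := by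
        rw [mul_pow]
        gcongr
        exact infDist_nonneg
    _ = ‖d‖ ^ 2 - ⟪u, d⟫ ^ 2 := norm_sq_mul_norm_sub_smul_sq hu d
    _ ≤ ‖d + c • u‖ ^ 2 := norm_sq_sub_inner_sq_le_norm_add_smul_sq hu d c

end InnerProduct

/-- The norm of an oblique projection is bounded by the reciprocal of the sine of the
minimal angle between its kernel `E` and its range `D`, where
`sin θ = inf { dist(e, D) : e ∈ E, ‖e‖ = 1 }`. -/
theorem oblique_proj_norm_le {V : Type*} [NormedAddCommGroup V]
    [InnerProductSpace ℝ V] [FiniteDimensional ℝ V]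
    (E D : Submodule ℝ V) (h : IsCompl D E) (hE : E ≠ ⊥)
    (s : ℝ)
    (hs : s = sInf ((fun e => Metric.infDist e (D : Set V)) '' {e : V | e ∈ E ∧ ‖e‖ = 1})) :
    ‖LinearMap.toContinuousLinearMap (D.subtype ∘ₗ D.linearProjOfIsCompl E h)‖ ≤ 1 / s := by
  have hdisj : Disjoint {e : V | e ∈ E ∧ ‖e‖ = 1} D := by
    refine Set.disjoint_left.2 fun x ⟨hxE, hx⟩ hxD => ?_
    rw [disjoint_def.1 h.disjoint x hxD hxE, norm_zero] at hx
    exact zero_ne_one hx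
  obtain ⟨u₀, hu₀E, hu₀, -⟩ := exists_norm_eq_one_smul_eq hE E.zero_mem
  have hs_pos : 0 < s := hs ▸ E.isCompact_setOf_mem_and_norm_eq_one.sInf_image_infDist_pos
    ⟨u₀, hu₀E, hu₀⟩ D.closed_of_finiteDimensional ⟨0, D.zero_mem⟩ hdisj
  refine ContinuousLinearMap.opNorm_le_bound _ (by positivity) fun v => ?_
  change ‖D.projection E h v‖ ≤ _
  obtain ⟨u, huE, hu, c, hcu⟩ := exists_norm_eq_one_smul_eq hE (sub_projection_mem h v)
  have hsu : s ≤ infDist u D :=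
    hs ▸ csInf_le ⟨0, Set.forall_mem_image.2 fun _ _ => infDist_nonneg⟩ ⟨u, ⟨huE, hu⟩, rfl⟩
  have hbound : s * ‖D.projection E h v‖ ≤ ‖v‖ :=
    calc s * ‖D.projection E h v‖ ≤ ‖D.projection E h v‖ * infDist u D := by
          rw [mul_comm]; gcongr
      _ ≤ ‖D.projection E h v + c • u‖ :=
          norm_mul_infDist_le_norm_add_smul D hu (projection_apply_mem h v) c
      _ = ‖v‖ := by rw [hcu, add_sub_cancel]
  rw [one_div_mul_eq_div, le_div_iff₀ hs_pos, mul_comm]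
  exact hbound
end
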